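/- Let D ≥ 2 and n ≥ 1 be integers. Let S be a subgroup of the n-qudit Pauli group P_n (so S is a finite group of D^n × D^n unitary matrices, each of which is a Pauli product), and let C = {ψ ∈ ℂ^{D^n} : sψ = ψ for all s ∈ S} be the common fixed subspace of S, with K = dim C. If K ≥ 1, then K · |S| = D^n. -/

import Mathlib

/-! The average `P = |S|⁻¹ ∑_{s ∈ S} s` is a projection onto the fixed space `C`, so
`K = tr P = |S|⁻¹ ∑_{s ∈ S} tr s` (character theory of the finite group `S`). A Pauli product
`ω^λ X^x Z^z` with `(x, z) ≠ 0` is traceless, because each tensor factor `X^a Z^b` has trace `0`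
or a vanishing geometric sum of `D`-th roots of unity on its diagonal; and `K ≥ 1` forces the only
scalar in `S` to be `1`. Hence only `s = 1` contributes, and `K |S| = tr 1 = D^n`. -/

open Matrix

/-- ω = exp(2πi/D), a primitive D-th root of unity. -/
noncomputable def omegaD (D : ℕ) : ℂ := Complex.exp (2 * Real.pi * Complex.I / D)

/-- The single-qudit Pauli operator Z = Σ_j ω^j |j⟩⟨j| on ℂ^D. -/
noncomputable def Zmat (D : ℕ) : Matrix (ZMod D) (ZMod D) ℂ :=
  Matrix.of fun j k => if k = j then omegaD D ^ j.val else 0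

/-- The single-qudit Pauli operator X = Σ_j |j⟩⟨j+1| on ℂ^D (index arithmetic mod D). -/
noncomputable def Xmat (D : ℕ) : Matrix (ZMod D) (ZMod D) ℂ :=
  Matrix.of fun j k => if k = j + 1 then (1 : ℂ) else 0

/-- The n-fold Kronecker product X^x Z^z = (X^{x_1}Z^{z_1}) ⊗ ⋯ ⊗ (X^{x_n}Z^{z_n}),
written entrywise on the index set (Fin n → ZMod D) ≃ (ZMod D)^n of size D^n. -/
noncomputable def XZ (D n : ℕ) [NeZero D] (x z : Fin n → ZMod D) :
    Matrix (Fin n → ZMod D) (Fin n → ZMod D) ℂ :=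
  Matrix.of fun j k => ∏ i, (Xmat D ^ (x i).val * Zmat D ^ (z i).val) (j i) (k i)

/-- A Pauli product ω^λ X^x Z^z on n qudits. -/
def IsPauli (D n : ℕ) [NeZero D] (M : Matrix (Fin n → ZMod D) (Fin n → ZMod D) ℂ) : Prop :=
  ∃ (lam : ZMod D) (x z : Fin n → ZMod D), M = omegaD D ^ lam.val • XZ D n x z

/-- The common fixed subspace C = {ψ : sψ = ψ for all s ∈ S} of a group S of
(invertible) matrices. -/
noncomputable def fixedSpace (D n : ℕ) [NeZero D]
    (S : Subgroup (Matrix (Fin n → ZMod D) (Fin n → ZMod D) ℂ)ˣ) :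
    Submodule ℂ ((Fin n → ZMod D) → ℂ) where
  carrier := {ψ | ∀ s ∈ S, (s : Matrix (Fin n → ZMod D) (Fin n → ZMod D) ℂ) *ᵥ ψ = ψ}
  add_mem' := by
    intro a b ha hb s hs
    rw [Matrix.mulVec_add, ha s hs, hb s hs]
  zero_mem' := by
    intro s hs
    rw [Matrix.mulVec_zero]
  smul_mem' := by
    intro c a ha s hs
    rw [Matrix.mulVec_smul, ha s hs]

namespace Matrix

variable {ι k : Type*} [Fintype ι] [DecidableEq ι] [Field k]

noncomputable def definingRep (G : Subgroup (Matrix ι ι k)ˣ) : Representation k G (ι → k) :=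
  (toLinAlgEquiv' : Matrix ι ι k ≃ₐ[k] _).toMonoidHom.comp ((Units.coeHom _).comp G.subtype)

theorem mem_invariants_definingRep {G : Subgroup (Matrix ι ι k)ˣ} {v : ι → k} :
    v ∈ (definingRep G).invariants ↔ ∀ g ∈ G, (g : Matrix ι ι k) *ᵥ v = v :=
  Subtype.forall

theorem finrank_invariants_definingRep_mul_card [CharZero k] (G : Subgroup (Matrix ι ι k)ˣ)
    [Fintype G] :
    (Module.finrank k (definingRep G).invariants : k) * Nat.card G
      = ∑ g : G, trace ((g : (Matrix ι ι k)ˣ) : Matrix ι ι k) := by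
  have hG : (Nat.card G : k) ≠ 0 := Nat.cast_ne_zero.mpr Nat.card_pos.ne'
  let : Invertible (Nat.card G : k) := invertibleOfNonzero hG
  rw [← (definingRep G).card_inv_mul_sum_char_eq_finrank, mul_comm, mul_inv_cancel_left₀ hG]
  exact Finset.sum_congr rfl fun g _ => trace_toLin'_eq _

end Matrix

theorem IsPrimitiveRoot.sum_zmod_pow_val_mul_eq_zero {k : Type*} [Field k] {ζ : k} {D : ℕ}
    [NeZero D] (hζ : IsPrimitiveRoot ζ D) {b : ZMod D} (hb : b ≠ 0) :
    ∑ j : ZMod D, ζ ^ (j.val * b.val) = 0 := by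
  have hζb : ζ ^ b.val ≠ 1 :=
    hζ.pow_ne_one_of_pos_of_lt ((ZMod.val_ne_zero b).mpr hb) (ZMod.val_lt b)
  have hreindex : ∑ j : ZMod D, ζ ^ (j.val * b.val) = ∑ i ∈ Finset.range D, (ζ ^ b.val) ^ i := by
    refine Finset.sum_nbij' ZMod.val (fun i => (i : ZMod D)) (fun j _ => ?_) (fun _ _ => ?_)
      (fun j _ => ZMod.natCast_zmod_val j) (fun i hi => ?_) (fun j _ => ?_)
    · exact Finset.mem_range.mpr (ZMod.val_lt j)
    · exact Finset.mem_univ _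
    · exact ZMod.val_cast_of_lt (Finset.mem_range.mp hi)
    · rw [← pow_mul, mul_comm]
  rw [hreindex, geom_sum_eq hζb, ← pow_mul, mul_comm, pow_mul, hζ.pow_eq_one, one_pow, sub_self,
    zero_div]

theorem isPrimitiveRoot_omegaD (D : ℕ) [NeZero D] : IsPrimitiveRoot (omegaD D) D :=
  Complex.isPrimitiveRoot_exp D (NeZero.ne D)

theorem Zmat_pow (D : ℕ) [NeZero D] (b : ℕ) :
    Zmat D ^ b = diagonal fun j => omegaD D ^ (j.val * b) := by
  have hZ : Zmat D = diagonal fun j => omegaD D ^ j.val := by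
    ext j k
    simp [Zmat, diagonal_apply, eq_comm]
  rw [hZ, diagonal_pow]
  simp only [Pi.pow_def, pow_mul]

theorem Xmat_pow_apply (D : ℕ) [NeZero D] (a : ℕ) (j k : ZMod D) :
    (Xmat D ^ a) j k = if k = j + a then 1 else 0 := by
  induction a generalizing k with
  | zero => simp [one_apply, eq_comm]
  | succ a ih =>
    rw [pow_succ, mul_apply, Finset.sum_eq_single (j + a) (fun m _ hm => by rw [ih, if_neg hm,
      zero_mul]) (by simp), ih, if_pos rfl, one_mul, Nat.cast_succ, ← add_assoc]
    rfl

theorem trace_Xmat_pow_mul_Zmat_pow_eq_zero (D : ℕ) [NeZero D] {a b : ZMod D}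
    (hab : a ≠ 0 ∨ b ≠ 0) : trace (Xmat D ^ a.val * Zmat D ^ b.val) = 0 := by
  simp only [trace, diag, Zmat_pow, mul_diagonal, Xmat_pow_apply, ZMod.natCast_zmod_val,
    left_eq_add]
  rcases eq_or_ne a 0 with rfl | ha
  · simpa using (isPrimitiveRoot_omegaD D).sum_zmod_pow_val_mul_eq_zero
      (hab.resolve_left (· rfl))
  · simp [ha]

theorem trace_XZ_eq_zero (D n : ℕ) [NeZero D] {x z : Fin n → ZMod D} (hxz : x ≠ 0 ∨ z ≠ 0) :
    trace (XZ D n x z) = 0 := by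
  have hprod : trace (XZ D n x z) = ∏ i, trace (Xmat D ^ (x i).val * Zmat D ^ (z i).val) := by
    simp only [trace, diag, Fintype.prod_sum]
    rfl
  obtain ⟨i, hi⟩ : ∃ i, x i ≠ 0 ∨ z i ≠ 0 := by
    simpa [funext_iff, ← exists_or] using hxz
  rw [hprod]
  exact Finset.prod_eq_zero (Finset.mem_univ i) (trace_Xmat_pow_mul_Zmat_pow_eq_zero D hi)

theorem XZ_zero_zero (D n : ℕ) [NeZero D] : XZ D n 0 0 = 1 := by
  ext j k
  simp only [XZ, of_apply, Pi.zero_apply, ZMod.val_zero, pow_zero, one_mul, one_apply]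
  split_ifs with hjk
  · simp [hjk]
  · obtain ⟨i, hi⟩ := Function.ne_iff.mp hjk
    exact Finset.prod_eq_zero (Finset.mem_univ i) (if_neg hi)

theorem isPauli_finite (D n : ℕ) [NeZero D] : {M | IsPauli D n M}.Finite :=
  (Set.finite_range fun p : ZMod D × (Fin n → ZMod D) × (Fin n → ZMod D) =>
    omegaD D ^ p.1.val • XZ D n p.2.1 p.2.2).subset fun _ ⟨l, x, z, h⟩ => ⟨(l, x, z), h.symm⟩

/-- The only Pauli products with nonzero trace are the scalars `ω^λ • 1`, and a scalar fixing a
nonzero vector is `1`. -/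
theorem IsPauli.trace_eq_zero {D n : ℕ} [NeZero D]
    {M : Matrix (Fin n → ZMod D) (Fin n → ZMod D) ℂ} (hM : IsPauli D n M) (hM1 : M ≠ 1)
    {ψ : (Fin n → ZMod D) → ℂ} (hψ : ψ ≠ 0) (hfix : M *ᵥ ψ = ψ) : trace M = 0 := by
  obtain ⟨l, x, z, rfl⟩ := hM
  by_cases hxz : x = 0 ∧ z = 0
  · obtain ⟨rfl, rfl⟩ := hxz
    rw [XZ_zero_zero, smul_mulVec, one_mulVec] at hfix
    have hl : omegaD D ^ l.val = 1 := smul_left_injective ℂ hψ (hfix.trans (one_smul ℂ ψ).symm)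
    exact absurd (by rw [XZ_zero_zero, hl, one_smul]) hM1
  · rw [trace_smul, trace_XZ_eq_zero D n (not_and_or.mp hxz), smul_zero]

theorem fixedSpace_eq_invariants (D n : ℕ) [NeZero D]
    (S : Subgroup (Matrix (Fin n → ZMod D) (Fin n → ZMod D) ℂ)ˣ) :
    fixedSpace D n S = (definingRep S).invariants :=
  Submodule.ext fun _ => mem_invariants_definingRep.symm

theorem stmt_0_general (D n : ℕ) [NeZero D]
    (S : Subgroup (Matrix (Fin n → ZMod D) (Fin n → ZMod D) ℂ)ˣ)
    (hS : ∀ s ∈ S, IsPauli D n (s : Matrix (Fin n → ZMod D) (Fin n → ZMod D) ℂ))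
    (hK : 1 ≤ Module.finrank ℂ (fixedSpace D n S)) :
    Module.finrank ℂ (fixedSpace D n S) * Nat.card S = D ^ n := by
  have : Finite S := ((isPauli_finite D n).preimage Units.val_injective.injOn).subset hS
  let : Fintype S := Fintype.ofFinite S
  obtain ⟨⟨ψ, hψS⟩, hψ⟩ := Module.finrank_pos_iff_exists_ne_zero.mp hK
  have htraceless : ∀ s : S, s ≠ 1 →
      trace ((s : (Matrix (Fin n → ZMod D) (Fin n → ZMod D) ℂ)ˣ) :
        Matrix (Fin n → ZMod D) (Fin n → ZMod D) ℂ) = 0 :=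
    fun s hs => (hS s s.2).trace_eq_zero (fun h => hs (Subtype.ext (Units.ext h)))
      (by simpa using hψ) (hψS s s.2)
  have hsum := finrank_invariants_definingRep_mul_card S
  rw [← fixedSpace_eq_invariants, Fintype.sum_eq_single 1 htraceless] at hsum
  simp only [OneMemClass.coe_one, Units.val_one, trace_one, Fintype.card_pi, ZMod.card,
    Finset.prod_const, Finset.card_univ, Fintype.card_fin] at hsum
  exact_mod_cast hsum

/-- Size theorem: if S is a subgroup of the n-qudit Pauli group, C its common
fixed subspace and K = dim C ≥ 1, then K · |S| = D^n. -/
theorem stmt_0 (D n : ℕ) [NeZero D] (hD : 2 ≤ D) (hn : 1 ≤ n)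
    (S : Subgroup (Matrix (Fin n → ZMod D) (Fin n → ZMod D) ℂ)ˣ)
    (hS : ∀ s ∈ S, IsPauli D n (s : Matrix (Fin n → ZMod D) (Fin n → ZMod D) ℂ))
    (hK : 1 ≤ Module.finrank ℂ (fixedSpace D n S)) :
    Module.finrank ℂ (fixedSpace D n S) * Nat.card S = D ^ n :=
  stmt_0_general D n S hS hK
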